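/- Generalized second law (information-theoretic form). Let n ≥ 1 and let X_1, …, X_n, X'_1, …, X'_n be random variables taking values in finite types with everywhere strictly positive joint pmf p. For each j let dep(j) ⊆ {1,…,j−1}, D_j := (X_i)_{i∈dep(j)}, and let q_j(· | x', d) be strictly positive probability mass functions on the value type of X_j. Define Q_j := E[ ln( p(X'_j | X_j, D_j) / q_j(X_j | X'_j, D_j) ) ]. Then H((X'_1,…,X'_n)) − H((X_1,…,X_n)) + Σ_{j=1}^n Q_j ≥ Δ_I, where Δ_I := Σ_{j=2}^n [ I(X'_j; D_j) − I(X_j; D_j) ] − Σ_{j=2}^n [ I(X'_j; (X'_1,…,X'_{j−1})) − I(X_j; (X_1,…,X_{j−1})) ]. -/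

import Mathlib

open scoped BigOperators

section InfoDefs

variable {Ω : Type*} [Fintype Ω]

/-- Pushforward probability mass function: `P(X = a)` for the random variable `X`
on the finite probability space `(Ω, μ)`. -/
def prob {α : Type*} [DecidableEq α] (μ : Ω → ℝ) (X : Ω → α) (a : α) : ℝ :=
  ∑ ω, if X ω = a then μ ω else 0

/-- Shannon entropy (natural logarithm) of the random variable `X` under `μ`. -/
noncomputable def ent {α : Type*} [Fintype α] [DecidableEq α] (μ : Ω → ℝ) (X : Ω → α) : ℝ :=
  ∑ a, Real.negMulLog (prob μ X a)

/-- Conditional Shannon entropy `H(X | Y)`. -/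
noncomputable def condEnt {α β : Type*} [Fintype α] [DecidableEq α] [Fintype β] [DecidableEq β]
    (μ : Ω → ℝ) (X : Ω → α) (Y : Ω → β) : ℝ :=
  ent μ (fun ω => (X ω, Y ω)) - ent μ Y

/-- Mutual information `I(X;Y)`. -/
noncomputable def mi {α β : Type*} [Fintype α] [DecidableEq α] [Fintype β] [DecidableEq β]
    (μ : Ω → ℝ) (X : Ω → α) (Y : Ω → β) : ℝ :=
  ent μ X + ent μ Y - ent μ (fun ω => (X ω, Y ω))

/-- Conditional mutual information `I(X;Y|Z)`. -/
noncomputable def cmi {α β γ : Type*} [Fintype α] [DecidableEq α] [Fintype β] [DecidableEq β]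
    [Fintype γ] [DecidableEq γ] (μ : Ω → ℝ) (X : Ω → α) (Y : Ω → β) (Z : Ω → γ) : ℝ :=
  ent μ (fun ω => (X ω, Z ω)) + ent μ (fun ω => (Y ω, Z ω))
    - ent μ (fun ω => (X ω, Y ω, Z ω)) - ent μ Z

/-- Conditional independence of `U` and `V` given `W`:
the joint law satisfies `P(U,V,W)·P(W) = P(U,W)·P(V,W)` pointwise. -/
def CondIndep {α β γ : Type*} [DecidableEq α] [DecidableEq β] [DecidableEq γ]
    (μ : Ω → ℝ) (U : Ω → α) (V : Ω → β) (W : Ω → γ) : Prop :=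
  ∀ u v w, prob μ (fun ω => (U ω, V ω, W ω)) (u, v, w) * prob μ W w
    = prob μ (fun ω => (U ω, W ω)) (u, w) * prob μ (fun ω => (V ω, W ω)) (v, w)

/-- The tuple `(A_0, …, A_{n-1})` of the first `n` members of a family of random
variables, viewed as a single random variable valued in a (dependent) product type. -/
def tup {α : ℕ → Type*} (A : (i : ℕ) → Ω → α i) (n : ℕ) : Ω → ((i : Fin n) → α i.1) :=
  fun ω i => A i.1 ω

/-- The restriction `(A_i)_{i ∈ s}` of a family of random variables to a finite index
set `s`, viewed as a single random variable (a one-point constant if `s = ∅`). -/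
def restrict {α : ℕ → Type*} (A : (i : ℕ) → Ω → α i) (s : Finset ℕ) :
    Ω → ((i : s) → α i.1) :=
  fun ω i => A i.1 ω

end InfoDefs

/-- The dissipated heat (divided by temperature) of subsystem `j` under local detailed
balance with backward kernel `q j`:
`Q_j := E[ln(p(X'_j | X_j, D_j) / q_j(X_j | X'_j, D_j))]`, where `D_j` is the
restriction of the initial states to the dependency set `dep j`. -/
noncomputable def Qheat {Ω : Type*} [Fintype Ω] {α : ℕ → Type*} [∀ i, Fintype (α i)]
    [∀ i, DecidableEq (α i)] (μ : Ω → ℝ) (X X' : (i : ℕ) → Ω → α i) (dep : ℕ → Finset ℕ)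
    (q : (j : ℕ) → α j → α j → ((i : dep j) → α i.1) → ℝ) (j : ℕ) : ℝ :=
  ∑ ω, μ ω *
    Real.log ((prob μ (fun ω' => (X j ω', X' j ω', restrict X (dep j) ω'))
          (X j ω, X' j ω, restrict X (dep j) ω)
        / prob μ (fun ω' => (X j ω', restrict X (dep j) ω')) (X j ω, restrict X (dep j) ω))
      / q j (X j ω) (X' j ω) (restrict X (dep j) ω))

/-! The heat bound for subsystem `j` is Gibbs' inequality between the joint law
`p(x_j, x'_j, d_j)` and the backward law `p(x'_j, d_j) q_j(x_j | x'_j, d_j)`: it gives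
`H(X_j, D_j) − H(X'_j, D_j) ≤ Q_j`. Summing over `j`, the chain rule
`H(X_{1:j}) = H(X_j, X_{1:j-1})` turns `Δ_I` into `Σ_j [H(X_j, D_j) − H(X'_j, D_j)]` plus the
telescoping sum `H(X'_{1:n}) − H(X_{1:n})`; the first subsystem contributes nothing to `Δ_I`
because `D_1` and `X_{1:0}` are constant. -/

lemma sum_mul_log_div_nonneg {ι : Type*} [Fintype ι] {p r : ι → ℝ} (hp : ∀ i, 0 ≤ p i)
    (hr : ∀ i, 0 ≤ r i) (hpr : ∀ i, 0 < p i → 0 < r i) (hsum : ∑ i, r i ≤ ∑ i, p i) :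
    0 ≤ ∑ i, p i * Real.log (p i / r i) := by
  have hpoint : ∀ i, p i - r i ≤ p i * Real.log (p i / r i) := fun i => by
    rcases (hp i).eq_or_lt with hpi | hpi
    · simp [← hpi, hr i]
    · have hri := hpr i hpi
      have := mul_le_mul_of_nonneg_left (Real.one_sub_inv_le_log_of_pos (div_pos hpi hri)) hpi.le
      rwa [inv_div, mul_sub, mul_one, mul_div_cancel₀ _ hpi.ne'] at this
  calc (0 : ℝ) ≤ ∑ i, (p i - r i) := by rw [Finset.sum_sub_distrib]; linarith
    _ ≤ _ := Finset.sum_le_sum fun i _ => hpoint i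

lemma log_ratio_add_log_sub_log {p₃ pad pbd k : ℝ} (h₃ : 0 < p₃) (had : 0 < pad) (hbd : 0 < pbd)
    (hk : 0 < k) :
    Real.log (p₃ / pad / k) + Real.log pad - Real.log pbd = Real.log (p₃ / (pbd * k)) := by
  rw [Real.log_div (by positivity) hk.ne', Real.log_div h₃.ne' had.ne',
    Real.log_div h₃.ne' (by positivity), Real.log_mul hbd.ne' hk.ne']
  ring

section Entropy

variable {Ω : Type*} [Fintype Ω] {μ : Ω → ℝ}

lemma prob_nonneg {α : Type*} [DecidableEq α] (hμ0 : ∀ ω, 0 ≤ μ ω) (X : Ω → α) (a : α) :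
    0 ≤ prob μ X a :=
  Finset.sum_nonneg fun ω _ => by split_ifs <;> simp [hμ0 ω]

lemma sum_prob {α : Type*} [Fintype α] [DecidableEq α] (X : Ω → α) :
    ∑ a, prob μ X a = ∑ ω, μ ω := by
  unfold prob
  rw [Finset.sum_comm]
  simp

lemma sum_mul_comp_eq_sum_prob_mul {α : Type*} [Fintype α] [DecidableEq α] (X : Ω → α)
    (f : α → ℝ) : ∑ ω, μ ω * f (X ω) = ∑ a, prob μ X a * f a := by
  simp only [prob, Finset.sum_mul, ite_mul, zero_mul]
  rw [Finset.sum_comm]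
  simp

lemma prob_le_prob_comp {α β : Type*} [DecidableEq α] [DecidableEq β] (hμ0 : ∀ ω, 0 ≤ μ ω)
    (X : Ω → α) (g : α → β) (a : α) : prob μ X a ≤ prob μ (fun ω => g (X ω)) (g a) :=
  Finset.sum_le_sum fun ω _ => by
    by_cases h : X ω = a
    · simp [h]
    · split_ifs <;> simp [hμ0 ω]

lemma prob_apply_pos {α : Type*} [DecidableEq α] (hμ0 : ∀ ω, 0 ≤ μ ω) (X : Ω → α) {ω : Ω}
    (hω : 0 < μ ω) : 0 < prob μ X (X ω) :=
  hω.trans_le <| by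
    simpa [prob] using Finset.single_le_sum (f := fun ω' => if X ω' = X ω then μ ω' else 0)
      (fun ω' _ => by split_ifs <;> simp [hμ0 ω']) (Finset.mem_univ ω)

lemma ent_eq_neg_sum_mul_log_prob {α : Type*} [Fintype α] [DecidableEq α] (X : Ω → α) :
    ent μ X = -∑ ω, μ ω * Real.log (prob μ X (X ω)) := by
  rw [sum_mul_comp_eq_sum_prob_mul X fun a => Real.log (prob μ X a), ent,
    ← Finset.sum_neg_distrib]
  simp [Real.negMulLog]

lemma ent_comp_of_injective {α β : Type*} [Fintype α] [DecidableEq α] [Fintype β]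
    [DecidableEq β] (X : Ω → α) {f : α → β} (hf : Function.Injective f) :
    ent μ (fun ω => f (X ω)) = ent μ X := by
  have hprob : ∀ a, prob μ (fun ω => f (X ω)) (f a) = prob μ X a := fun a => by
    simp [prob, hf.eq_iff]
  have hzero : ∀ b ∉ Set.range f, prob μ (fun ω => f (X ω)) b = 0 := fun b hb =>
    Finset.sum_eq_zero fun ω _ => if_neg fun h => hb ⟨X ω, h⟩
  rw [ent, ent, ← Finset.sum_subset (Finset.subset_univ (Finset.univ.image f)),
    Finset.sum_image fun a _ b _ h => hf h]
  · simp only [hprob]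
  · intro b _ hb
    rw [hzero b (by simpa using hb), Real.negMulLog_zero]

lemma ent_of_subsingleton {β : Type*} [Fintype β] [DecidableEq β] [Subsingleton β]
    (hμ1 : ∑ ω, μ ω = 1) (Y : Ω → β) : ent μ Y = 0 := by
  have hprob : ∀ b, prob μ Y b = 1 := fun b => by
    rw [prob, ← hμ1]
    exact Finset.sum_congr rfl fun ω _ => if_pos (Subsingleton.elim _ _)
  simp [ent, hprob]

lemma mi_of_subsingleton {α β : Type*} [Fintype α] [DecidableEq α] [Fintype β] [DecidableEq β]
    [Subsingleton β] (hμ1 : ∑ ω, μ ω = 1) (X : Ω → α) (Y : Ω → β) : mi μ X Y = 0 := by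
  rw [mi, ent_of_subsingleton hμ1 Y, ← ent_comp_of_injective _ Prod.fst_injective]
  ring

lemma ent_pair_tup {α : ℕ → Type*} [∀ i, Fintype (α i)] [∀ i, DecidableEq (α i)]
    (Y : (i : ℕ) → Ω → α i) (j : ℕ) :
    ent μ (fun ω => (Y j ω, tup Y j ω)) = ent μ (tup Y (j + 1)) := by
  refine ent_comp_of_injective (tup Y (j + 1))
    (f := fun v : (i : Fin (j + 1)) → α i => ((v (Fin.last j) : α j),
      (fun i : Fin j => v i.castSucc : (i : Fin j) → α i)))
    fun v w h => funext fun i => ?_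
  induction i using Fin.lastCases with
  | last => exact congrArg Prod.fst h
  | cast i => exact congrFun (congrArg Prod.snd h) i

lemma ent_sub_ent_le_of_backward_kernel {α β δ : Type*} [Fintype α] [DecidableEq α] [Fintype β]
    [DecidableEq β] [Fintype δ] [DecidableEq δ] (hμ0 : ∀ ω, 0 ≤ μ ω)
    (A : Ω → α) (B : Ω → β) (D : Ω → δ) (κ : α → β → δ → ℝ) (hκ0 : ∀ a b d, 0 < κ a b d)
    (hκ1 : ∀ b d, ∑ a, κ a b d = 1) :
    ent μ (fun ω => (A ω, D ω)) - ent μ (fun ω => (B ω, D ω))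
      ≤ ∑ ω, μ ω * Real.log (prob μ (fun ω' => (A ω', B ω', D ω')) (A ω, B ω, D ω)
          / prob μ (fun ω' => (A ω', D ω')) (A ω, D ω) / κ (A ω) (B ω) (D ω)) := by
  set Z : Ω → α × β × δ := fun ω => (A ω, B ω, D ω)
  set pBD := prob μ (fun ω => (B ω, D ω))
  set r : α × β × δ → ℝ := fun v => pBD v.2 * κ v.1 v.2.1 v.2.2
  have hpoint : ∀ ω, μ ω * Real.log (prob μ Z (Z ω) / prob μ (fun ω => (A ω, D ω)) (A ω, D ω)
        / κ (A ω) (B ω) (D ω)) + μ ω * Real.log (prob μ (fun ω => (A ω, D ω)) (A ω, D ω))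
        - μ ω * Real.log (pBD (B ω, D ω)) = μ ω * Real.log (prob μ Z (Z ω) / r (Z ω)) := by
    intro ω
    rcases (hμ0 ω).eq_or_lt with hω | hω
    · simp [← hω]
    have hZ := prob_apply_pos hμ0 Z hω
    have hAD := hZ.trans_le (prob_le_prob_comp hμ0 Z (fun v => (v.1, v.2.2)) (Z ω))
    have hBD := hZ.trans_le (prob_le_prob_comp hμ0 Z Prod.snd (Z ω))
    rw [← mul_add, ← mul_sub, log_ratio_add_log_sub_log hZ hAD hBD (hκ0 _ _ _)]
  have hsum_r : ∑ v, r v = ∑ v, prob μ Z v := by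
    rw [sum_prob, ← sum_prob (fun ω => (B ω, D ω)), Fintype.sum_prod_type, Finset.sum_comm]
    refine Finset.sum_congr rfl fun w _ => ?_
    change ∑ a, pBD w * κ a w.1 w.2 = pBD w
    rw [← Finset.mul_sum, hκ1, mul_one]
  rw [← sub_nonneg, ent_eq_neg_sum_mul_log_prob, ent_eq_neg_sum_mul_log_prob, sub_neg_eq_add,
    sub_add_eq_sub_sub, sub_neg_eq_add, ← Finset.sum_add_distrib, ← Finset.sum_sub_distrib,
    Finset.sum_congr rfl fun ω _ => hpoint ω,
    sum_mul_comp_eq_sum_prob_mul Z fun v => Real.log (prob μ Z v / r v)]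
  refine sum_mul_log_div_nonneg (prob_nonneg hμ0 Z)
    (fun v => mul_nonneg (prob_nonneg hμ0 _ _) (hκ0 _ _ _).le) (fun v hv => ?_) hsum_r.le
  exact mul_pos (hv.trans_le (prob_le_prob_comp hμ0 Z Prod.snd v)) (hκ0 _ _ _)

lemma mi_diff_sub_mi_tup_diff_eq {α : ℕ → Type*} [∀ i, Fintype (α i)]
    [∀ i, DecidableEq (α i)] {δ : Type*} [Fintype δ] [DecidableEq δ]
    (X X' : (i : ℕ) → Ω → α i) (D : Ω → δ) (j : ℕ) :
    (mi μ (X' j) D - mi μ (X j) D) - (mi μ (X' j) (tup X' j) - mi μ (X j) (tup X j))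
      = (ent μ (fun ω => (X j ω, D ω)) - ent μ (fun ω => (X' j ω, D ω)))
        + ((ent μ (tup X' (j + 1)) - ent μ (tup X' j))
          - (ent μ (tup X (j + 1)) - ent μ (tup X j))) := by
  simp only [mi]
  rw [← ent_pair_tup X' j, ← ent_pair_tup X j]
  ring

end Entropy

theorem statement13_general {Ω : Type*} [Fintype Ω] (μ : Ω → ℝ)
    (hμ0 : ∀ ω, 0 ≤ μ ω) (hμ1 : ∑ ω, μ ω = 1)
    {α : ℕ → Type*} [∀ i, Fintype (α i)] [∀ i, DecidableEq (α i)]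
    (n : ℕ) (X X' : (i : ℕ) → Ω → α i)
    (dep : ℕ → Finset ℕ) (hdep : ∀ j, dep j ⊆ Finset.range j)
    (q : (j : ℕ) → α j → α j → ((i : dep j) → α i.1) → ℝ)
    (hq0 : ∀ j x x' d, 0 < q j x x' d) (hq1 : ∀ j x' d, ∑ x, q j x x' d = 1) :
    ent μ (tup X' n) - ent μ (tup X n) + ∑ j ∈ Finset.range n, Qheat μ X X' dep q j
      ≥ (∑ j ∈ Finset.Ico 1 n,
            (mi μ (X' j) (restrict X (dep j)) - mi μ (X j) (restrict X (dep j))))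
        - ∑ j ∈ Finset.Ico 1 n,
            (mi μ (X' j) (tup X' j) - mi μ (X j) (tup X j)) := by
  have : Subsingleton ((i : dep 0) → α i.1) :=
    ⟨fun _ _ => funext fun i => absurd (hdep 0 i.2) (by simp)⟩
  have hcorr : (∑ j ∈ Finset.Ico 1 n,
        (mi μ (X' j) (restrict X (dep j)) - mi μ (X j) (restrict X (dep j))))
      - ∑ j ∈ Finset.Ico 1 n, (mi μ (X' j) (tup X' j) - mi μ (X j) (tup X j))
      = ∑ j ∈ Finset.range n, (ent μ (fun ω => (X j ω, restrict X (dep j) ω))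
          - ent μ (fun ω => (X' j ω, restrict X (dep j) ω)))
        + (ent μ (tup X' n) - ent μ (tup X n)) := by
    rw [← Finset.sum_sub_distrib, Finset.sum_subset
      (fun j hj => Finset.mem_range.2 (Finset.mem_Ico.1 hj).2) fun j hjn hj => ?_,
      Finset.sum_congr rfl fun j _ => mi_diff_sub_mi_tup_diff_eq X X' (restrict X (dep j)) j,
      Finset.sum_add_distrib]
    · congr 1
      rw [Finset.sum_sub_distrib, Finset.sum_range_sub (fun j => ent μ (tup X' j)),
        Finset.sum_range_sub (fun j => ent μ (tup X j)),
        ent_of_subsingleton hμ1 (tup X' 0), ent_of_subsingleton hμ1 (tup X 0)]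
      ring
    · obtain rfl : j = 0 := by
        simp only [Finset.mem_range, Finset.mem_Ico, not_and, not_lt] at hjn hj
        omega
      simp only [mi_of_subsingleton hμ1, sub_self]
  have hheat := Finset.sum_le_sum (s := Finset.range n) (g := Qheat μ X X' dep q) fun j _ =>
    ent_sub_ent_le_of_backward_kernel hμ0 (X j) (X' j) (restrict X (dep j)) (q j) (hq0 j) (hq1 j)
  rw [ge_iff_le, hcorr]
  linarith

/-- Generalized second law incorporating internal correlations
(information-theoretic form): `H(X'_{1:n}) − H(X_{1:n}) + Σ_j Q_j ≥ Δ_I`, where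
`Δ_I = Σ_{j=2}^n [I(X'_j;D_j) − I(X_j;D_j)]
  − Σ_{j=2}^n [I(X'_j;X'_{1:j-1}) − I(X_j;X_{1:j-1})]`. -/
theorem statement13 {Ω : Type*} [Fintype Ω] (μ : Ω → ℝ)
    (hμ0 : ∀ ω, 0 ≤ μ ω) (hμ1 : ∑ ω, μ ω = 1)
    {α : ℕ → Type*} [∀ i, Fintype (α i)] [∀ i, DecidableEq (α i)]
    (n : ℕ) (hn : 1 ≤ n) (X X' : (i : ℕ) → Ω → α i)
    (hpos : ∀ v, 0 < prob μ (fun ω => (tup X n ω, tup X' n ω)) v)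
    (dep : ℕ → Finset ℕ) (hdep : ∀ j, dep j ⊆ Finset.range j)
    (q : (j : ℕ) → α j → α j → ((i : dep j) → α i.1) → ℝ)
    (hq0 : ∀ j x x' d, 0 < q j x x' d) (hq1 : ∀ j x' d, ∑ x, q j x x' d = 1) :
    ent μ (tup X' n) - ent μ (tup X n) + ∑ j ∈ Finset.range n, Qheat μ X X' dep q j
      ≥ (∑ j ∈ Finset.Ico 1 n,
            (mi μ (X' j) (restrict X (dep j)) - mi μ (X j) (restrict X (dep j))))
        - ∑ j ∈ Finset.Ico 1 n,
            (mi μ (X' j) (tup X' j) - mi μ (X j) (tup X j)) :=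
  statement13_general μ hμ0 hμ1 n X X' dep hdep q hq0 hq1
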